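/- arXiv:math/0504436 — 7 statements merged into one kernel-verified Lean document; each statement's English description precedes it below -/
import Mathlib

section
/- Let t : H → H be the unique k-algebra anti-automorphism of H with t(Y_u^i) = Y_u^i for all generators. Then for every i ∈ Fin N and every word u over Fin N of length ≥ 2, t( Σ_{T ∈ RT_u^i} (−1)^{v(T)} Λ_↗(T) ) = Σ_{T ∈ RT_u^i} (−1)^{v(T)} Λ_↘(T). (Equivalently: the antipode S_R = t∘S_H∘t of the right Lagrange Hopf algebra is given on generators by the reduced-tree sum with the descending right depth-first products Λ_↘.) -/
open scoped TensorProduct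

/-- The generator set `G = {(i,u) : i ∈ Fin N, u a word over Fin N of length ≥ 2}`. -/
abbrev Gen (N : ℕ) : Type := { p : Fin N × List (Fin N) // 2 ≤ p.2.length }

/-- The free unital associative `k`-algebra on `Gen N`. -/
abbrev H (N : ℕ) (k : Type) [Field k] : Type := FreeAlgebra k (Gen N)

/-- `Y N k i u` is the generator `Y_u^i` when `|u| ≥ 2`, and for a one-letter word
`[j]` it is `1` if `i = j` and `0` otherwise (and `0` for the empty word). -/
noncomputable def Y (N : ℕ) (k : Type) [Field k] (i : Fin N) (u : List (Fin N)) : H N k :=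
  if h : 2 ≤ u.length then FreeAlgebra.ι k (⟨(i, u), h⟩ : Gen N)
  else if u = [i] then 1 else 0

/-- `N`-colored planar trees: a single-vertex tree with a color, or a root with a color
and an ordered list of offspring subtrees. -/
inductive PTree (N : ℕ) : Type
  | leaf : Fin N → PTree N
  | node : Fin N → List (PTree N) → PTree N

namespace PTree

/-- The color of the root. -/
def rootColor {N : ℕ} : PTree N → Fin N
  | leaf i => i
  | node i _ => i

/-- The number of non-leaf vertices: `v(single-vertex) = 0` and
`v(c(i;T₁,…,T_n)) = 1 + Σ_k v(T_k)`. -/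
def vcount {N : ℕ} : PTree N → ℕ
  | leaf _ => 0
  | node _ ts => 1 + (ts.attach.map (fun t => vcount t.1)).sum
decreasing_by
  have := List.sizeOf_lt_of_mem t.2
  simp only [PTree.node.sizeOf_spec]
  omega

end PTree

/-- `IsRT i u T` asserts `T ∈ RT_u^i`: `T` is a reduced `N`-colored planar tree with root
color `i` and leaf word `u`.  For `|u| = 1` the only member is the single-vertex tree when
`u = [i]`; otherwise the members are the trees `c(i; T₁,…,T_n)` with `n ≥ 2`,
`u = u₁ ⋯ u_n`, and `T_k ∈ RT_{u_k}^{i_k}` where `i_k` is the root color of `T_k`. -/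
inductive IsRT {N : ℕ} : Fin N → List (Fin N) → PTree N → Prop
  | leaf (i : Fin N) : IsRT i [i] (PTree.leaf i)
  | node (i : Fin N) (ts : List (PTree N)) (us : List (List (Fin N)))
      (h2 : 2 ≤ ts.length)
      (hall : List.Forall₂ (fun (t : PTree N) (u : List (Fin N)) => IsRT t.rootColor u t) ts us) :
      IsRT i us.flatten (PTree.node i ts)

/-- `Λ_↗`: the product of the generators attached to the non-leaf vertices in ascending
right depth-first order: `Λ_↗(c(i;T₁,…,T_n)) = Λ_↗(T_n) ⋯ Λ_↗(T₁) · Y(root)`. -/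
noncomputable def lamUp (N : ℕ) (k : Type) [Field k] : PTree N → H N k
  | PTree.leaf _ => 1
  | PTree.node i ts =>
      ((ts.attach.map (fun t => lamUp N k t.1)).reverse).prod * Y N k i (ts.map PTree.rootColor)
decreasing_by
  have := List.sizeOf_lt_of_mem t.2
  simp only [PTree.node.sizeOf_spec]
  omega

/-- `Λ_↘`: the product of the generators attached to the non-leaf vertices in descending
right depth-first order: `Λ_↘(c(i;T₁,…,T_n)) = Y(root) · Λ_↘(T₁) ⋯ Λ_↘(T_n)`. -/
noncomputable def lamDn (N : ℕ) (k : Type) [Field k] : PTree N → H N k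
  | PTree.leaf _ => 1
  | PTree.node i ts =>
      Y N k i (ts.map PTree.rootColor) * (ts.attach.map (fun t => lamDn N k t.1)).prod
decreasing_by
  have := List.sizeOf_lt_of_mem t.2
  simp only [PTree.node.sizeOf_spec]
  omega

section Aux

variable {N : ℕ} {k : Type} [Field k]
variable (τ : H N k →ₗ[k] H N k)
variable (ht1 : τ 1 = 1)
variable (htanti : ∀ a b : H N k, τ (a * b) = τ b * τ a)
variable (htgen : ∀ g : Gen N, τ (FreeAlgebra.ι k g) = FreeAlgebra.ι k g)

include ht1 htanti htgen

lemma tau_Y (i : Fin N) (u : List (Fin N)) : τ (Y N k i u) = Y N k i u := by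
  unfold Y
  by_cases h : 2 ≤ u.length
  · simp [h, htgen]
  · by_cases h2 : u = [i] <;> simp [h, h2, ht1]

lemma tau_prod (l : List (H N k)) : τ l.prod = (l.reverse.map τ).prod := by
  induction l with
  | nil => simpa using ht1
  | cons a l ih =>
      simp only [List.prod_cons, htanti, List.reverse_cons, List.map_append,
        List.prod_append, List.map_cons, List.map_nil, List.prod_cons, List.prod_nil,
        mul_one, ih]

lemma tau_lamUp : ∀ T : PTree N, τ (lamUp N k T) = lamDn N k T
  | PTree.leaf j => by simpa [lamUp, lamDn] using ht1
  | PTree.node i ts => by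
      rw [lamUp, lamDn, htanti, tau_Y τ ht1 htanti htgen,
        tau_prod τ ht1 htanti htgen, List.reverse_reverse, List.map_map]
      congr 2
      refine List.map_congr_left ?_
      rintro ⟨s, hs⟩ -
      have := List.sizeOf_lt_of_mem hs
      exact tau_lamUp s
decreasing_by
  simp only [PTree.node.sizeOf_spec]
  omega

lemma tau_neg_one_pow (n : ℕ) : τ ((-1 : H N k) ^ n) = (-1 : H N k) ^ n := by
  rcases Nat.even_or_odd n with h | h
  · rw [h.neg_one_pow, ht1]
  · rw [h.neg_one_pow, map_neg, ht1]

lemma tau_term (T : PTree N) :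
    τ (((-1 : H N k) ^ T.vcount) * lamUp N k T)
      = ((-1 : H N k) ^ T.vcount) * lamDn N k T := by
  rw [htanti, tau_lamUp τ ht1 htanti htgen, tau_neg_one_pow τ ht1 htanti htgen]
  exact (((Commute.neg_one_left (lamDn N k T)).pow_left _)).eq.symm

end Aux

/-- if `t` is the `k`-algebra anti-automorphism of `H` fixing every
generator `Y_u^i`, then for every `i` and every word `u` of length `≥ 2`,
`t(Σ_{T ∈ RT_u^i} (−1)^{v(T)} Λ_↗(T)) = Σ_{T ∈ RT_u^i} (−1)^{v(T)} Λ_↘(T)`. -/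
theorem right_Lagrange_antipode_reduced_trees (N : ℕ) (hN : 1 ≤ N) (k : Type) [Field k]
    (t : H N k →ₗ[k] H N k)
    (ht1 : t 1 = 1)
    (htanti : ∀ a b : H N k, t (a * b) = t b * t a)
    (htbij : Function.Bijective t)
    (htgen : ∀ g : Gen N, t (FreeAlgebra.ι k g) = FreeAlgebra.ι k g)
    (i : Fin N) (u : List (Fin N)) (hu : 2 ≤ u.length) :
    t (∑ᶠ T ∈ {T : PTree N | IsRT i u T}, ((-1 : H N k) ^ T.vcount) * lamUp N k T)
      = ∑ᶠ T ∈ {T : PTree N | IsRT i u T}, ((-1 : H N k) ^ T.vcount) * lamDn N k T := by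
  classical
  set s : Set (PTree N) := {T | IsRT i u T}
  set f : PTree N → H N k := fun T => ((-1 : H N k) ^ T.vcount) * lamUp N k T with hf
  set g : PTree N → H N k := fun T => ((-1 : H N k) ^ T.vcount) * lamDn N k T with hg
  have hterm : ∀ T, t (s.indicator f T) = s.indicator g T := by
    intro T
    by_cases h : T ∈ s
    · rw [Set.indicator_of_mem h, Set.indicator_of_mem h]
      exact tau_term t ht1 htanti htgen T
    · rw [Set.indicator_of_notMem h, Set.indicator_of_notMem h, map_zero]
  rw [finsum_mem_def, finsum_mem_def]
  show t (∑ᶠ a, s.indicator f a) = ∑ᶠ a, s.indicator g a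
  by_cases hfin : (Function.support (s.indicator f)).Finite
  · calc t (∑ᶠ a, s.indicator f a) = ∑ᶠ a, t (s.indicator f a) :=
        t.toAddMonoidHom.map_finsum hfin
      _ = ∑ᶠ a, s.indicator g a := finsum_congr hterm
  · have hz : ∀ x : H N k, t x = 0 ↔ x = 0 := fun x =>
      ⟨fun h => htbij.injective (by rw [h, map_zero]), fun h => by rw [h, map_zero]⟩
    have hsup : Function.support (s.indicator g) = Function.support (s.indicator f) := by
      ext T
      rw [Function.mem_support, Function.mem_support, ← hterm T]
      exact not_congr (hz _)
    rw [finsum_of_infinite_support hfin, map_zero,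
      finsum_of_infinite_support (hsup ▸ hfin)]
end

section
/- Let A be an R-bialgebra equipped with a connected filtration F. Then there exists a linear map S : A → A such that (i) for every n ∈ ℕ and every a ∈ F n, S(a) = Σ_{k=0}^{n} (u − id)^{*k}(a), where u = η∘ε and the powers are convolution powers; and (ii) S is an antipode: mul∘(S⊗id)∘Δ = η∘ε = mul∘(id⊗S)∘Δ. In particular every connected filtered bialgebra is a Hopf algebra. -/
open scoped TensorProduct

/-- `S` is an antipode for the bialgebra `A`:
`mul ∘ (S ⊗ id) ∘ Δ = η ∘ ε = mul ∘ (id ⊗ S) ∘ Δ`. -/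
def IsAntipode (R A : Type) [CommRing R] [Ring A] [Bialgebra R A] (S : A →ₗ[R] A) : Prop :=
  LinearMap.mul' R A ∘ₗ TensorProduct.map S LinearMap.id ∘ₗ Coalgebra.comul
      = Algebra.linearMap R A ∘ₗ Coalgebra.counit ∧
  LinearMap.mul' R A ∘ₗ TensorProduct.map LinearMap.id S ∘ₗ Coalgebra.comul
      = Algebra.linearMap R A ∘ₗ Coalgebra.counit

/-- `S'` is a co-opposite antipode for the bialgebra `A`, i.e. an antipode for the
co-opposite bialgebra with comultiplication `τ ∘ Δ`:
`mul ∘ (S' ⊗ id) ∘ τ ∘ Δ = η ∘ ε = mul ∘ (id ⊗ S') ∘ τ ∘ Δ`. -/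
def IsCoopAntipode (R A : Type) [CommRing R] [Ring A] [Bialgebra R A] (S' : A →ₗ[R] A) : Prop :=
  LinearMap.mul' R A ∘ₗ TensorProduct.map S' LinearMap.id ∘ₗ
      (TensorProduct.comm R A A).toLinearMap ∘ₗ Coalgebra.comul
      = Algebra.linearMap R A ∘ₗ Coalgebra.counit ∧
  LinearMap.mul' R A ∘ₗ TensorProduct.map LinearMap.id S' ∘ₗ
      (TensorProduct.comm R A A).toLinearMap ∘ₗ Coalgebra.comul
      = Algebra.linearMap R A ∘ₗ Coalgebra.counit

/-- `F` is a connected filtration of the bialgebra `A`: it is monotone, exhaustive,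
`F 0 = R·1`, multiplicative (`F m · F n ≤ F (m+n)`), and `Δ` maps `F n` into
`Σ_{p+q=n} F p ⊗ F q` (the sum of the images of `F p ⊗ F q` in `A ⊗ A`). -/
def IsConnectedFiltration (R A : Type) [CommRing R] [Ring A] [Bialgebra R A]
    (F : ℕ → Submodule R A) : Prop :=
  Monotone F ∧
  (⨆ n, F n) = ⊤ ∧
  F 0 = Submodule.span R {(1 : A)} ∧
  (∀ m n, F m * F n ≤ F (m + n)) ∧
  (∀ n : ℕ, ∀ a ∈ F n,
    Coalgebra.comul (R := R) a ∈
      ⨆ (pq : ℕ × ℕ) (_ : pq.1 + pq.2 = n),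
        LinearMap.range (TensorProduct.map (F pq.1).subtype (F pq.2).subtype))

/-- The convolution `φ * ψ = mul ∘ (φ ⊗ ψ) ∘ Δ` of linear maps `A → A`. -/
noncomputable def conv (R A : Type) [CommRing R] [Ring A] [Bialgebra R A]
    (φ ψ : A →ₗ[R] A) : A →ₗ[R] A :=
  LinearMap.mul' R A ∘ₗ TensorProduct.map φ ψ ∘ₗ Coalgebra.comul

/-- Convolution powers: `φ^{*0} = η ∘ ε` and `φ^{*(k+1)} = φ^{*k} * φ`. -/
noncomputable def convPow (R A : Type) [CommRing R] [Ring A] [Bialgebra R A]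
    (φ : A →ₗ[R] A) : ℕ → (A →ₗ[R] A)
  | 0 => Algebra.linearMap R A ∘ₗ Coalgebra.counit
  | n + 1 => conv R A (convPow R A φ n) φ


section AntipodeConstruction

open TensorProduct LinearMap
open scoped Classical

variable {R A : Type} [CommRing R] [Ring A] [Bialgebra R A]

noncomputable abbrev uMap (R A : Type) [CommRing R] [Ring A] [Bialgebra R A] : A →ₗ[R] A :=
  Algebra.linearMap R A ∘ₗ Coalgebra.counit

lemma map_sub_left (f g h : A →ₗ[R] A) :
    TensorProduct.map (f - g) h = TensorProduct.map f h - TensorProduct.map g h := by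
  apply TensorProduct.ext'
  intro x y
  simp [TensorProduct.sub_tmul]

lemma map_sub_right (f g h : A →ₗ[R] A) :
    TensorProduct.map h (f - g) = TensorProduct.map h f - TensorProduct.map h g := by
  apply TensorProduct.ext'
  intro x y
  simp [TensorProduct.tmul_sub]

lemma map_sum_left {ι : Type*} (s : Finset ι) (f : ι → (A →ₗ[R] A)) (h : A →ₗ[R] A) :
    TensorProduct.map (∑ k ∈ s, f k) h = ∑ k ∈ s, TensorProduct.map (f k) h := by
  apply TensorProduct.ext'
  intro x y
  simp [TensorProduct.sum_tmul, LinearMap.sum_apply]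

lemma map_sum_right {ι : Type*} (s : Finset ι) (f : ι → (A →ₗ[R] A)) (h : A →ₗ[R] A) :
    TensorProduct.map h (∑ k ∈ s, f k) = ∑ k ∈ s, TensorProduct.map h (f k) := by
  apply TensorProduct.ext'
  intro x y
  simp [TensorProduct.tmul_sum, LinearMap.sum_apply]

lemma conv_sub_left (f g h : A →ₗ[R] A) :
    conv R A (f - g) h = conv R A f h - conv R A g h := by
  simp only [conv, map_sub_left, LinearMap.sub_comp, LinearMap.comp_sub]

lemma conv_sub_right (f g h : A →ₗ[R] A) :
    conv R A h (f - g) = conv R A h f - conv R A h g := by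
  simp only [conv, map_sub_right, LinearMap.sub_comp, LinearMap.comp_sub]

lemma conv_sum_left {ι : Type*} (s : Finset ι) (f : ι → (A →ₗ[R] A)) (h : A →ₗ[R] A) :
    conv R A (∑ k ∈ s, f k) h = ∑ k ∈ s, conv R A (f k) h := by
  simp only [conv, map_sum_left]
  ext a
  simp [LinearMap.sum_apply, map_sum]

lemma conv_sum_right {ι : Type*} (s : Finset ι) (f : ι → (A →ₗ[R] A)) (h : A →ₗ[R] A) :
    conv R A h (∑ k ∈ s, f k) = ∑ k ∈ s, conv R A h (f k) := by
  simp only [conv, map_sum_right]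
  ext a
  simp [LinearMap.sum_apply, map_sum]

lemma conv_unit_left (ψ : A →ₗ[R] A) : conv R A (uMap R A) ψ = ψ := by
  have h1 : TensorProduct.map (uMap R A) ψ
      = TensorProduct.map (Algebra.linearMap R A) ψ ∘ₗ
        (Coalgebra.counit (R := R) (A := A)).rTensor A := by
    simp only [uMap, LinearMap.rTensor, ← TensorProduct.map_comp, LinearMap.comp_id]
  ext a
  simp only [conv, LinearMap.comp_apply, h1]
  have h2 := Coalgebra.rTensor_counit_comul (R := R) a
  rw [h2]
  simp [LinearMap.mul'_apply]

lemma conv_unit_right (ψ : A →ₗ[R] A) : conv R A ψ (uMap R A) = ψ := by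
  have h1 : TensorProduct.map ψ (uMap R A)
      = TensorProduct.map ψ (Algebra.linearMap R A) ∘ₗ
        (Coalgebra.counit (R := R) (A := A)).lTensor A := by
    simp only [uMap, LinearMap.lTensor, ← TensorProduct.map_comp, LinearMap.comp_id]
  ext a
  simp only [conv, LinearMap.comp_apply, h1]
  have h2 := Coalgebra.lTensor_counit_comul (R := R) a
  rw [h2]
  simp [LinearMap.mul'_apply]

lemma conv_assoc (f g h : A →ₗ[R] A) :
    conv R A (conv R A f g) h = conv R A f (conv R A g h) := by
  have key : LinearMap.mul' R A ∘ₗ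
        TensorProduct.map (LinearMap.mul' R A ∘ₗ TensorProduct.map f g) h ∘ₗ
        ((TensorProduct.assoc R A A A).symm : A ⊗[R] (A ⊗[R] A) →ₗ[R] (A ⊗[R] A) ⊗[R] A)
      = LinearMap.mul' R A ∘ₗ TensorProduct.map f (LinearMap.mul' R A ∘ₗ TensorProduct.map g h) := by
    apply TensorProduct.ext'
    intro x yz
    induction yz using TensorProduct.induction_on with
    | zero => simp only [TensorProduct.tmul_zero, map_zero]
    | tmul y z =>
        simp only [LinearMap.comp_apply, LinearEquiv.coe_coe, TensorProduct.assoc_symm_tmul,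
          TensorProduct.map_tmul, LinearMap.mul'_apply, mul_assoc]
    | add p q hp hq =>
        simp only [TensorProduct.tmul_add, map_add] at *
        rw [hp, hq]
  have split1 : TensorProduct.map (LinearMap.mul' R A ∘ₗ TensorProduct.map f g ∘ₗ Coalgebra.comul) h
      = TensorProduct.map (LinearMap.mul' R A ∘ₗ TensorProduct.map f g) h ∘ₗ
        (Coalgebra.comul (R := R) (A := A)).rTensor A := by
    rw [LinearMap.rTensor, ← TensorProduct.map_comp, LinearMap.comp_id]
    rfl
  have split2 : TensorProduct.map f (LinearMap.mul' R A ∘ₗ TensorProduct.map g h ∘ₗ Coalgebra.comul)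
      = TensorProduct.map f (LinearMap.mul' R A ∘ₗ TensorProduct.map g h) ∘ₗ
        (Coalgebra.comul (R := R) (A := A)).lTensor A := by
    rw [LinearMap.lTensor, ← TensorProduct.map_comp, LinearMap.comp_id]
    rfl
  ext a
  simp only [conv, LinearMap.comp_apply, split1, split2]
  rw [← Coalgebra.coassoc_symm_apply (R := R) a]
  exact LinearMap.congr_fun key _


lemma map_zero_left' {M N P Q : Type*} [AddCommMonoid M] [AddCommMonoid N] [AddCommMonoid P]
    [AddCommMonoid Q] [Module R M] [Module R N] [Module R P] [Module R Q] (h : N →ₗ[R] Q) :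
    TensorProduct.map (0 : M →ₗ[R] P) h = 0 := by
  apply TensorProduct.ext'
  intro x y
  simp

lemma map_zero_right' {M N P Q : Type*} [AddCommMonoid M] [AddCommMonoid N] [AddCommMonoid P]
    [AddCommMonoid Q] [Module R M] [Module R N] [Module R P] [Module R Q] (h : N →ₗ[R] Q) :
    TensorProduct.map h (0 : M →ₗ[R] P) = 0 := by
  apply TensorProduct.ext'
  intro x y
  simp

lemma convPow_zero (φ : A →ₗ[R] A) : convPow R A φ 0 = uMap R A := rfl

lemma convPow_succ (φ : A →ₗ[R] A) (k : ℕ) :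
    convPow R A φ (k + 1) = conv R A (convPow R A φ k) φ := rfl

lemma conv_convPow_comm (φ : A →ₗ[R] A) (k : ℕ) :
    conv R A φ (convPow R A φ k) = convPow R A φ (k + 1) := by
  induction k with
  | zero => rw [convPow_zero, conv_unit_right, convPow_succ, convPow_zero, conv_unit_left]
  | succ k ih =>
      rw [convPow_succ, ← conv_assoc, ih]
      rfl

lemma geom_right (φ : A →ₗ[R] A) (n : ℕ) :
    conv R A (∑ k ∈ Finset.range (n + 1), convPow R A φ k) (uMap R A - φ)
      = uMap R A - convPow R A φ (n + 1) := by
  rw [conv_sub_right, conv_unit_right, conv_sum_left]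
  have h1 : ∀ k ∈ Finset.range (n + 1), conv R A (convPow R A φ k) φ = convPow R A φ (k + 1) :=
    fun k _ => (convPow_succ φ k).symm
  rw [Finset.sum_congr rfl h1]
  rw [← Finset.sum_sub_distrib, Finset.sum_range_sub' (fun k => convPow R A φ k) (n + 1),
    convPow_zero]

lemma geom_left (φ : A →ₗ[R] A) (n : ℕ) :
    conv R A (uMap R A - φ) (∑ k ∈ Finset.range (n + 1), convPow R A φ k)
      = uMap R A - convPow R A φ (n + 1) := by
  rw [conv_sub_left, conv_unit_left, conv_sum_right]
  have h1 : ∀ k ∈ Finset.range (n + 1), conv R A φ (convPow R A φ k) = convPow R A φ (k + 1) :=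
    fun k _ => conv_convPow_comm φ k
  rw [Finset.sum_congr rfl h1]
  rw [← Finset.sum_sub_distrib, Finset.sum_range_sub' (fun k => convPow R A φ k) (n + 1),
    convPow_zero]

section Filtered

variable (F : ℕ → Submodule R A) (hF : IsConnectedFiltration R A F)

noncomputable abbrev phi : A →ₗ[R] A := uMap R A - LinearMap.id

include hF in
lemma phi_comp_F0 : phi (R := R) (A := A) ∘ₗ (F 0).subtype = 0 := by
  ext x
  have hx : (x : A) ∈ Submodule.span R {(1 : A)} := by rw [← hF.2.2.1]; exact x.2
  obtain ⟨r, hr⟩ := Submodule.mem_span_singleton.mp hx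
  simp only [LinearMap.comp_apply, Submodule.subtype_apply, LinearMap.zero_apply, ← hr]
  have h1 : phi (R := R) (A := A) (1 : A) = 0 := by
    simp [phi, uMap, Bialgebra.counit_one]
  rw [map_smul, h1, smul_zero]

include hF in
lemma convPow_vanish : ∀ k n, n < k → ∀ a ∈ F n, convPow R A (phi (R := R) (A := A)) k a = 0 := by
  intro k
  induction k with
  | zero => intro n h; omega
  | succ k ih =>
    intro n hn a ha
    have ha' : a ∈ F k := hF.1 (by omega) ha
    have hcom := hF.2.2.2.2 k a ha'
    have hrw : convPow R A (phi (R := R) (A := A)) (k + 1) a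
        = (LinearMap.mul' R A ∘ₗ
            TensorProduct.map (convPow R A (phi (R := R) (A := A)) k)
              (phi (R := R) (A := A))) (Coalgebra.comul a) := rfl
    rw [hrw]
    have hker : (⨆ (pq : ℕ × ℕ) (_ : pq.1 + pq.2 = k),
          LinearMap.range (TensorProduct.map (F pq.1).subtype (F pq.2).subtype))
        ≤ LinearMap.ker (LinearMap.mul' R A ∘ₗ
            TensorProduct.map (convPow R A (phi (R := R) (A := A)) k)
              (phi (R := R) (A := A))) := by
      refine iSup_le fun pq => iSup_le fun hpq => ?_
      rw [LinearMap.range_le_ker_iff, LinearMap.comp_assoc, ← TensorProduct.map_comp]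
      rcases lt_or_eq_of_le (Nat.le.intro hpq : pq.1 ≤ k) with hlt | heq
      · have h0 : convPow R A (phi (R := R) (A := A)) k ∘ₗ (F pq.1).subtype = 0 := by
          ext x
          exact ih pq.1 hlt x x.2
        rw [h0, map_zero_left', LinearMap.comp_zero]
      · have hq0 : pq.2 = 0 := by omega
        have h0 : (phi (R := R) (A := A)) ∘ₗ (F pq.2).subtype = 0 := by
          rw [hq0]; exact phi_comp_F0 F hF
        rw [h0, map_zero_right', LinearMap.comp_zero]
    exact LinearMap.mem_ker.mp (hker hcom)

include hF in
lemma exists_mem_F (a : A) : ∃ n, a ∈ F n := by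
  have : a ∈ (⨆ n, F n) := hF.2.1.symm ▸ Submodule.mem_top
  rwa [Submodule.mem_iSup_of_directed _ hF.1.directed_le] at this

/-- The partial geometric sums. -/
noncomputable def Tn (n : ℕ) : A →ₗ[R] A :=
  ∑ k ∈ Finset.range (n + 1), convPow R A (phi (R := R) (A := A)) k

/-- The underlying function of the antipode. -/
noncomputable def Sfun (a : A) : A :=
  Tn (R := R) (A := A) (Nat.find (exists_mem_F F hF a)) a

include hF in
lemma Tn_stable {m n : ℕ} (hmn : m ≤ n) {a : A} (ha : a ∈ F m) :
    Tn (R := R) (A := A) n a = Tn (R := R) (A := A) m a := by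
  unfold Tn
  simp only [LinearMap.sum_apply]
  refine (Finset.sum_subset (by intro k hk; simp at *; omega) ?_).symm
  intro k hk1 hk2
  simp only [Finset.mem_range] at hk1 hk2
  exact convPow_vanish F hF k m (by omega) a ha

include hF in
lemma Sfun_eq {n : ℕ} {a : A} (ha : a ∈ F n) :
    Sfun F hF a = Tn (R := R) (A := A) n a := by
  unfold Sfun
  have h1 : Nat.find (exists_mem_F F hF a) ≤ n := Nat.find_min' _ ha
  rw [Tn_stable F hF h1 (Nat.find_spec (exists_mem_F F hF a))]

/-- The antipode as a linear map. -/
noncomputable def Smap : A →ₗ[R] A where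
  toFun := Sfun F hF
  map_add' := by
    intro a b
    obtain ⟨n, ha⟩ := exists_mem_F F hF a
    obtain ⟨m, hb⟩ := exists_mem_F F hF b
    have ha' : a ∈ F (max n m) := hF.1 (le_max_left n m) ha
    have hb' : b ∈ F (max n m) := hF.1 (le_max_right n m) hb
    rw [Sfun_eq F hF ha', Sfun_eq F hF hb', Sfun_eq F hF (Submodule.add_mem _ ha' hb'),
      map_add]
  map_smul' := by
    intro r a
    show Sfun F hF (r • a) = r • Sfun F hF a
    obtain ⟨n, ha⟩ := exists_mem_F F hF a
    rw [Sfun_eq F hF ha, Sfun_eq F hF (Submodule.smul_mem _ r ha), map_smul]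


include hF in
lemma Smap_agree_left (n : ℕ) {a : A} (ha : a ∈ F n) :
    TensorProduct.map (Smap F hF) LinearMap.id (Coalgebra.comul (R := R) a)
      = TensorProduct.map (Tn (R := R) (A := A) n) LinearMap.id (Coalgebra.comul (R := R) a) := by
  have hcom := hF.2.2.2.2 n a ha
  have hker : (⨆ (pq : ℕ × ℕ) (_ : pq.1 + pq.2 = n),
        LinearMap.range (TensorProduct.map (F pq.1).subtype (F pq.2).subtype))
      ≤ LinearMap.ker (TensorProduct.map (Smap F hF - Tn (R := R) (A := A) n) LinearMap.id) := by
    refine iSup_le fun pq => iSup_le fun hpq => ?_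
    rw [LinearMap.range_le_ker_iff, ← TensorProduct.map_comp, LinearMap.id_comp]
    have h0 : (Smap F hF - Tn (R := R) (A := A) n) ∘ₗ (F pq.1).subtype = 0 := by
      ext x
      have hx : (x : A) ∈ F n := hF.1 (Nat.le.intro hpq) x.2
      simp only [LinearMap.comp_apply, Submodule.subtype_apply, LinearMap.sub_apply,
        LinearMap.zero_apply]
      rw [sub_eq_zero]
      exact Sfun_eq F hF hx
    rw [h0, map_zero_left']
  have h2 := LinearMap.mem_ker.mp (hker hcom)
  rw [map_sub_left] at h2
  simp only [LinearMap.sub_apply] at h2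
  exact sub_eq_zero.mp h2

include hF in
lemma Smap_agree_right (n : ℕ) {a : A} (ha : a ∈ F n) :
    TensorProduct.map LinearMap.id (Smap F hF) (Coalgebra.comul (R := R) a)
      = TensorProduct.map LinearMap.id (Tn (R := R) (A := A) n) (Coalgebra.comul (R := R) a) := by
  have hcom := hF.2.2.2.2 n a ha
  have hker : (⨆ (pq : ℕ × ℕ) (_ : pq.1 + pq.2 = n),
        LinearMap.range (TensorProduct.map (F pq.1).subtype (F pq.2).subtype))
      ≤ LinearMap.ker (TensorProduct.map LinearMap.id (Smap F hF - Tn (R := R) (A := A) n)) := by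
    refine iSup_le fun pq => iSup_le fun hpq => ?_
    rw [LinearMap.range_le_ker_iff, ← TensorProduct.map_comp, LinearMap.id_comp]
    have h0 : (Smap F hF - Tn (R := R) (A := A) n) ∘ₗ (F pq.2).subtype = 0 := by
      ext x
      have hx : (x : A) ∈ F n := hF.1 (by omega : pq.2 ≤ n) x.2
      simp only [LinearMap.comp_apply, Submodule.subtype_apply, LinearMap.sub_apply,
        LinearMap.zero_apply]
      rw [sub_eq_zero]
      exact Sfun_eq F hF hx
    rw [h0, map_zero_right']
  have h2 := LinearMap.mem_ker.mp (hker hcom)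
  rw [map_sub_right] at h2
  simp only [LinearMap.sub_apply] at h2
  exact sub_eq_zero.mp h2

include hF in
lemma Smap_isAntipode : IsAntipode R A (Smap F hF) := by
  have hid : uMap R A - phi (R := R) (A := A) = LinearMap.id := by
    simp [phi]
  constructor
  · ext a
    obtain ⟨n, ha⟩ := exists_mem_F F hF a
    simp only [LinearMap.comp_apply]
    rw [Smap_agree_left F hF n ha]
    have h3 : (LinearMap.mul' R A) ((TensorProduct.map (Tn (R := R) (A := A) n) LinearMap.id)
        ((Coalgebra.comul (R := R)) a)) = conv R A (Tn (R := R) (A := A) n) LinearMap.id a := rfl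
    rw [h3, ← hid]
    unfold Tn
    rw [geom_right]
    simp only [LinearMap.sub_apply]
    rw [convPow_vanish F hF (n + 1) n (by omega) a ha, sub_zero]
    rfl
  · ext a
    obtain ⟨n, ha⟩ := exists_mem_F F hF a
    simp only [LinearMap.comp_apply]
    rw [Smap_agree_right F hF n ha]
    have h3 : (LinearMap.mul' R A) ((TensorProduct.map LinearMap.id (Tn (R := R) (A := A) n))
        ((Coalgebra.comul (R := R)) a)) = conv R A LinearMap.id (Tn (R := R) (A := A) n) a := rfl
    rw [h3, ← hid]
    unfold Tn
    rw [geom_left]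
    simp only [LinearMap.sub_apply]
    rw [convPow_vanish F hF (n + 1) n (by omega) a ha, sub_zero]
    rfl

end Filtered

end AntipodeConstruction

/-- a connected filtered bialgebra has an antipode, given on `F n` by the
geometric series `S(a) = Σ_{k=0}^{n} (u − id)^{*k}(a)` where `u = η ∘ ε`. -/
theorem connected_filtered_bialgebra_has_antipode (R A : Type) [CommRing R] [Ring A]
    [Bialgebra R A] (F : ℕ → Submodule R A) (hF : IsConnectedFiltration R A F) :
    ∃ S : A →ₗ[R] A,
      (∀ n : ℕ, ∀ a ∈ F n,
        S a = ∑ j ∈ Finset.range (n + 1),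
          convPow R A (Algebra.linearMap R A ∘ₗ Coalgebra.counit - LinearMap.id) j a) ∧
      IsAntipode R A S := by
  classical
  refine ⟨Smap F hF, ?_, Smap_isAntipode F hF⟩
  intro n a ha
  have h1 : Smap F hF a = Tn (R := R) (A := A) n a := Sfun_eq F hF ha
  rw [h1, Tn, LinearMap.sum_apply]
end

section
/- Let A be an R-bialgebra equipped with a connected filtration F, let u = η∘ε, and let (u − id)^{*k} denote convolution powers of the linear map u − id : A → A. Then for every n ∈ ℕ and every a ∈ F n, (u − id)^{*(n+1)}(a) = 0. -/
open scoped TensorProduct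

/-- in a connected filtered bialgebra, `(u − id)^{*(n+1)}` vanishes on `F n`,
where `u = η ∘ ε`. -/
theorem convPow_counit_sub_id_vanishes (R A : Type) [CommRing R] [Ring A]
    [Bialgebra R A] (F : ℕ → Submodule R A) (hF : IsConnectedFiltration R A F) :
    ∀ n : ℕ, ∀ a ∈ F n,
      convPow R A (Algebra.linearMap R A ∘ₗ Coalgebra.counit - LinearMap.id) (n + 1) a = 0 := by
  obtain ⟨hmono, hsup, hF0, hmul, hcomul⟩ := hF
  set f : A →ₗ[R] A := Algebra.linearMap R A ∘ₗ Coalgebra.counit - LinearMap.id with hf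
  have hf1 : ∀ a ∈ F 0, f a = 0 := by
    intro a ha
    rw [hF0, Submodule.mem_span_singleton] at ha
    obtain ⟨r, rfl⟩ := ha
    simp [hf, Algebra.algebraMap_eq_smul_one]
  suffices H : ∀ n k, n + 1 ≤ k → ∀ a ∈ F n, convPow R A f k a = 0 by
    intro n a ha; exact H n (n + 1) le_rfl a ha
  intro n
  induction n using Nat.strong_induction_on with
  | _ n IH =>
    intro k hk a ha
    obtain ⟨m, rfl⟩ : ∃ m, k = m + 1 := ⟨k - 1, by omega⟩
    have hm : n ≤ m := by omega
    have key : (⨆ (pq : ℕ × ℕ) (_ : pq.1 + pq.2 = n),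
        LinearMap.range (TensorProduct.map (F pq.1).subtype (F pq.2).subtype)) ≤
        LinearMap.ker (LinearMap.mul' R A ∘ₗ TensorProduct.map (convPow R A f m) f) := by
      apply iSup_le; rintro ⟨p, q⟩; apply iSup_le; intro hpq
      rw [LinearMap.range_le_ker_iff]
      apply TensorProduct.ext'
      rintro ⟨x, hx⟩ ⟨y, hy⟩
      simp only [LinearMap.comp_apply, TensorProduct.map_tmul, Submodule.coe_subtype,
        LinearMap.mul'_apply]
      rcases Nat.eq_zero_or_pos q with hq | hq
      · subst hq
        rw [hf1 y hy, mul_zero]; simp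
      · have hp : p < n := by omega
        rw [IH p hp m (by omega) x hx, zero_mul]; simp
    have h0 := key (hcomul n a ha)
    rw [LinearMap.mem_ker] at h0
    simpa [convPow, conv] using h0
end

section
/- Let A be an R-bialgebra equipped with a connected filtration F. Then for every n ≥ 1 and every a ∈ F n with ε(a) = 0, the element Δ(a) − a ⊗ 1 − 1 ⊗ a of A ⊗ A lies in the image of (F(n−1) ⊓ ker ε) ⊗ (F(n−1) ⊓ ker ε) under the canonical map into A ⊗ A. -/
open scoped TensorProduct

/-- in a connected filtered bialgebra, for `n ≥ 1` and `a ∈ F n` with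
`ε(a) = 0`, the element `Δ(a) − a ⊗ 1 − 1 ⊗ a` lies in the image of
`(F(n−1) ⊓ ker ε) ⊗ (F(n−1) ⊓ ker ε)` in `A ⊗ A`. -/
theorem comul_sub_primitive_mem (R A : Type) [CommRing R] [Ring A]
    [Bialgebra R A] (F : ℕ → Submodule R A) (hF : IsConnectedFiltration R A F) :
    ∀ n : ℕ, 1 ≤ n → ∀ a ∈ F n, Coalgebra.counit (R := R) a = 0 →
      Coalgebra.comul (R := R) a - a ⊗ₜ[R] (1 : A) - (1 : A) ⊗ₜ[R] a ∈
        LinearMap.range (TensorProduct.map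
          ((F (n - 1) ⊓ LinearMap.ker (Coalgebra.counit (R := R) (A := A))).subtype)
          ((F (n - 1) ⊓ LinearMap.ker (Coalgebra.counit (R := R) (A := A))).subtype)) := by
  obtain ⟨hmono, -, hF0, -, hcomul⟩ := hF
  intro n hn a ha hεa
  set π : A →ₗ[R] A :=
    LinearMap.id - Algebra.linearMap R A ∘ₗ Coalgebra.counit (R := R) with hπ
  have hπ_apply : ∀ x : A, π x = x - Coalgebra.counit (R := R) x • 1 := by
    intro x
    simp [hπ, Algebra.linearMap_apply, Algebra.smul_def]
  have hone : ∀ p : ℕ, (1 : A) ∈ F p := by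
    intro p
    exact hmono (Nat.zero_le p) (hF0 ▸ Submodule.mem_span_singleton_self 1)
  set K : Submodule R A :=
    F (n - 1) ⊓ LinearMap.ker (Coalgebra.counit (R := R) (A := A)) with hK
  -- π maps F p into K for p ≤ n - 1
  have hπK : ∀ p : ℕ, p ≤ n - 1 → ∀ x ∈ F p, π x ∈ K := by
    intro p hp x hx
    rw [hK, Submodule.mem_inf]
    constructor
    · rw [hπ_apply]
      exact hmono hp (sub_mem hx (Submodule.smul_mem _ _ (hone p)))
    · rw [LinearMap.mem_ker, hπ_apply]
      simp [Bialgebra.counit_one]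
  -- π kills F 0
  have hπ0 : ∀ x ∈ F 0, π x = 0 := by
    intro x hx
    rw [hF0, Submodule.mem_span_singleton] at hx
    obtain ⟨r, rfl⟩ := hx
    rw [hπ_apply]
    simp [Bialgebra.counit_one]
  -- key identity : (π ⊗ π)(Δ a) = Δ a - a ⊗ 1 - 1 ⊗ a
  have hkey : TensorProduct.map π π (Coalgebra.comul (R := R) a)
      = Coalgebra.comul (R := R) a - a ⊗ₜ[R] (1 : A) - (1 : A) ⊗ₜ[R] a := by
    rw [← LinearMap.rTensor_comp_lTensor]
    have hl : π.lTensor A (Coalgebra.comul (R := R) a)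
        = Coalgebra.comul (R := R) a - a ⊗ₜ[R] (1 : A) := by
      have : π.lTensor A = LinearMap.id -
          (Algebra.linearMap R A).lTensor A ∘ₗ
            (Coalgebra.counit (R := R) (A := A)).lTensor A := by
        rw [hπ, LinearMap.lTensor_sub, LinearMap.lTensor_comp, LinearMap.lTensor_id]
      rw [this]
      simp only [LinearMap.sub_apply, LinearMap.id_apply, LinearMap.coe_comp,
        Function.comp_apply, Coalgebra.lTensor_counit_comul, LinearMap.lTensor_tmul,
        Algebra.linearMap_apply, map_one]
    rw [LinearMap.coe_comp, Function.comp_apply, hl, map_sub]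
    have hr : π.rTensor A (Coalgebra.comul (R := R) a)
        = Coalgebra.comul (R := R) a - (1 : A) ⊗ₜ[R] a := by
      have : π.rTensor A = LinearMap.id -
          (Algebra.linearMap R A).rTensor A ∘ₗ
            (Coalgebra.counit (R := R) (A := A)).rTensor A := by
        rw [hπ, LinearMap.rTensor_sub, LinearMap.rTensor_comp, LinearMap.rTensor_id]
      rw [this]
      simp only [LinearMap.sub_apply, LinearMap.id_apply, LinearMap.coe_comp,
        Function.comp_apply, Coalgebra.rTensor_counit_comul, LinearMap.rTensor_tmul,
        Algebra.linearMap_apply, map_one]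
    rw [hr, LinearMap.rTensor_tmul, hπ_apply, hεa]
    simp only [zero_smul, sub_zero]
    abel
  rw [← hkey]
  -- now push the filtration membership through π ⊗ π
  have hmem := hcomul n a ha
  have : TensorProduct.map π π (Coalgebra.comul (R := R) a) ∈
      Submodule.map (TensorProduct.map π π)
        (⨆ (pq : ℕ × ℕ) (_ : pq.1 + pq.2 = n),
          LinearMap.range (TensorProduct.map (F pq.1).subtype (F pq.2).subtype)) :=
    Submodule.mem_map_of_mem hmem
  refine SetLike.le_def.mp ?_ this
  simp only [Submodule.map_iSup]
  refine iSup_le fun pq => iSup_le fun hpq => ?_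
  have hrange : Submodule.map (TensorProduct.map π π)
      (LinearMap.range (TensorProduct.map (F pq.1).subtype (F pq.2).subtype))
      = LinearMap.range (TensorProduct.map (π ∘ₗ (F pq.1).subtype) (π ∘ₗ (F pq.2).subtype)) := by
    rw [← LinearMap.range_comp, ← TensorProduct.map_comp]
  rw [hrange]
  rcases Nat.eq_zero_or_pos pq.1 with h1 | h1
  · have hz : π ∘ₗ (F pq.1).subtype = 0 := by
      ext x
      exact hπ0 x.1 (h1 ▸ x.2)
    rw [hz]
    have : TensorProduct.map (0 : (F pq.1) →ₗ[R] A) (π ∘ₗ (F pq.2).subtype) = 0 := by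
      ext x y
      simp
    rw [this, LinearMap.range_zero]
    exact bot_le
  rcases Nat.eq_zero_or_pos pq.2 with h2 | h2
  · have hz : π ∘ₗ (F pq.2).subtype = 0 := by
      ext x
      exact hπ0 x.1 (h2 ▸ x.2)
    rw [hz]
    have : TensorProduct.map (π ∘ₗ (F pq.1).subtype) (0 : (F pq.2) →ₗ[R] A) = 0 := by
      ext x y
      simp
    rw [this, LinearMap.range_zero]
    exact bot_le
  · have hp1 : pq.1 ≤ n - 1 := by omega
    have hp2 : pq.2 ≤ n - 1 := by omega
    set g1 : (F pq.1) →ₗ[R] K :=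
      LinearMap.codRestrict K (π ∘ₗ (F pq.1).subtype) (fun x => hπK pq.1 hp1 x.1 x.2)
    set g2 : (F pq.2) →ₗ[R] K :=
      LinearMap.codRestrict K (π ∘ₗ (F pq.2).subtype) (fun x => hπK pq.2 hp2 x.1 x.2)
    have e1 : π ∘ₗ (F pq.1).subtype = K.subtype ∘ₗ g1 :=
      (LinearMap.subtype_comp_codRestrict _ _ _).symm
    have e2 : π ∘ₗ (F pq.2).subtype = K.subtype ∘ₗ g2 :=
      (LinearMap.subtype_comp_codRestrict _ _ _).symm
    rw [e1, e2, TensorProduct.map_comp]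
    exact LinearMap.range_comp_le_range _ _
end

section
/- The algebra homomorphism ε is a counit for the Brouder–Fabretti–Krattenthaler comultiplication Δ: (ε ⊗ id)∘Δ = id_H = (id ⊗ ε)∘Δ, under the canonical identifications k ⊗ H ≅ H ≅ H ⊗ k. -/
open scoped TensorProduct

/-- `D N k i u` is the defining value of the BFK comultiplication on `Y_u^i`:
the sum over all compositions `c` of `|u|` (equivalently over `q = 1, …, p` and the
compositions of `p` into `q` parts) and all colorings `v` of the blocks, of
`(Y_{u_1(c)}^{v 1} ⋯ Y_{u_q(c)}^{v q}) ⊗ Y_v^i`, where `u_1(c), …, u_q(c)` are the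
consecutive blocks obtained by splitting `u` according to `c`. -/
noncomputable def D (N : ℕ) (k : Type) [Field k] (i : Fin N) (u : List (Fin N)) :
    H N k ⊗[k] H N k :=
  ∑ c : Composition u.length, ∑ v : Fin c.length → Fin N,
    (List.ofFn (fun q : Fin c.length =>
        Y N k (v q) ((u.splitWrtComposition c).get
          (Fin.cast (u.length_splitWrtComposition c).symm q)))).prod
      ⊗ₜ[k] Y N k i (List.ofFn v)

/-- The BFK comultiplication `Δ`, the unique algebra homomorphism with `Δ(Y_u^i) = D(i,u)`
on generators. -/
noncomputable def Delta (N : ℕ) (k : Type) [Field k] : H N k →ₐ[k] (H N k ⊗[k] H N k) :=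
  FreeAlgebra.lift k (fun g : Gen N => D N k g.1.1 g.1.2)

/-- The counit `ε`, the unique algebra homomorphism vanishing on all generators. -/
noncomputable def eps (N : ℕ) (k : Type) [Field k] : H N k →ₐ[k] k :=
  FreeAlgebra.lift k (fun _ : Gen N => (0 : k))

lemma eps_Y (N : ℕ) (k : Type) [Field k] (j : Fin N) (w : List (Fin N)) :
    eps N k (Y N k j w) = if w = [j] then 1 else 0 := by
  by_cases h1 : 2 ≤ w.length
  · rw [Y, dif_pos h1, if_neg (by rintro rfl; simp at h1)]
    simp [eps, FreeAlgebra.lift_ι_apply]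
  · rw [Y, dif_neg h1]
    split_ifs <;> simp

lemma splitAux_replicate {α : Type*} : ∀ l : List α,
    l.splitWrtCompositionAux (List.replicate l.length 1) = l.map fun a => [a]
  | [] => rfl
  | a :: t => by
    rw [List.length_cons, List.replicate_succ, List.splitWrtCompositionAux_cons]
    simp [splitAux_replicate t]

lemma split_ones {α : Type*} (l : List α) :
    l.splitWrtComposition (Composition.ones l.length) = l.map fun a => [a] := by
  show l.splitWrtCompositionAux (Composition.ones l.length).blocks = _
  rw [Composition.ones_blocks]
  exact splitAux_replicate l

lemma split_single {α : Type*} (l : List α) (h : 0 < l.length) :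
    l.splitWrtComposition (Composition.single l.length h) = [l] := by
  show l.splitWrtCompositionAux (Composition.single l.length h).blocks = _
  rw [Composition.single_blocks]
  simp [List.splitWrtCompositionAux]

lemma ofFn_cast {α : Type*} {n m : ℕ} (h : n = m) (f : Fin m → α) :
    (List.ofFn fun i : Fin n => f (Fin.cast h i)) = List.ofFn f := by subst h; rfl

lemma eps_prod (N : ℕ) (k : Type) [Field k] (u : List (Fin N)) (c : Composition u.length)
    (v : Fin c.length → Fin N) :
    eps N k (List.ofFn (fun q : Fin c.length =>
        Y N k (v q) ((u.splitWrtComposition c).get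
          (Fin.cast (u.length_splitWrtComposition c).symm q)))).prod
      = if (∀ q : Fin c.length, (u.splitWrtComposition c).get
          (Fin.cast (u.length_splitWrtComposition c).symm q) = [v q]) then 1 else 0 := by
  rw [map_list_prod, List.map_ofFn]
  rw [List.prod_ofFn]
  simp only [Function.comp, eps_Y]
  rw [Finset.prod_boole]
  simp

lemma genL (N : ℕ) (k : Type) [Field k] (i : Fin N) (u : List (Fin N)) (hu : 2 ≤ u.length) :
    (TensorProduct.lid k (H N k))
      ((TensorProduct.map (eps N k).toLinearMap LinearMap.id) (D N k i u)) = Y N k i u := by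
  have hp : 0 < u.length := by omega
  rw [D, map_sum, map_sum]
  simp only [map_sum, TensorProduct.map_tmul, LinearMap.id_coe, id_eq, TensorProduct.lid_tmul,
    AlgHom.toLinearMap_apply, eps_prod]
  rw [Finset.sum_eq_single (Composition.ones u.length)]
  · set c := Composition.ones u.length with hc
    have hlen : c.length = u.length := Composition.ones_length u.length
    have hsplit : u.splitWrtComposition c = u.map fun a => [a] := split_ones u
    have hget : ∀ q : Fin c.length,
        (u.splitWrtComposition c).get (Fin.cast (u.length_splitWrtComposition c).symm q)
          = [u.get (Fin.cast hlen q)] := by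
      intro q
      simp [hsplit, List.getElem_map]
    rw [Finset.sum_eq_single (fun q : Fin c.length => u.get (Fin.cast hlen q))]
    · rw [if_pos (by intro q; rw [hget q])]
      rw [ofFn_cast hlen u.get, List.ofFn_get, one_smul]
    · intro v _ hv
      rw [if_neg, zero_smul]
      intro hall
      apply hv
      funext q
      have := hall q
      rw [hget q] at this
      exact (List.cons.injEq _ _ _ _ ▸ this).1.symm
    · intro h; exact absurd (Finset.mem_univ _) h
  · intro c _ hc
    apply Finset.sum_eq_zero
    intro v _
    rw [if_neg, zero_smul]
    intro hall
    apply hc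
    rw [Composition.eq_ones_iff]
    intro b hb
    rw [← u.map_length_splitWrtComposition c] at hb
    obtain ⟨w, hw, hwl⟩ := List.mem_map.1 hb
    obtain ⟨⟨n, hn⟩, hg⟩ := List.mem_iff_get.1 hw
    have hn' : n < c.length := by rwa [u.length_splitWrtComposition c] at hn
    have := hall ⟨n, hn'⟩
    rw [show (Fin.cast (u.length_splitWrtComposition c).symm ⟨n, hn'⟩ : Fin _) = ⟨n, hn⟩ from rfl,
      hg] at this
    rw [← hwl, this]
    rfl
  · intro h; exact absurd (Finset.mem_univ _) h

lemma genR (N : ℕ) (k : Type) [Field k] (i : Fin N) (u : List (Fin N)) (hu : 2 ≤ u.length) :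
    (TensorProduct.rid k (H N k))
      ((TensorProduct.map LinearMap.id (eps N k).toLinearMap) (D N k i u)) = Y N k i u := by
  have hp : 0 < u.length := by omega
  rw [D, map_sum, map_sum]
  simp only [map_sum, TensorProduct.map_tmul, LinearMap.id_coe, id_eq, TensorProduct.rid_tmul,
    AlgHom.toLinearMap_apply, eps_Y]
  rw [Finset.sum_eq_single (Composition.single u.length hp)]
  · set c := Composition.single u.length hp with hc
    have hL : c.length = 1 := Composition.single_length hp
    have hsplit : u.splitWrtComposition c = [u] := split_single u hp
    have hsingle : [i] = List.ofFn (fun _ : Fin c.length => i) := by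
      rw [List.ofFn_const, hL]; rfl
    rw [Finset.sum_eq_single (fun _ : Fin c.length => i)]
    · rw [if_pos hsingle.symm, one_smul]
      have hget : ∀ q : Fin c.length,
          (u.splitWrtComposition c).get (Fin.cast (u.length_splitWrtComposition c).symm q)
            = u := by intro q; simp [hsplit]
      have : (List.ofFn (fun q : Fin c.length =>
          Y N k i ((u.splitWrtComposition c).get
            (Fin.cast (u.length_splitWrtComposition c).symm q))))
          = List.ofFn (fun _ : Fin c.length => Y N k i u) := by
        congr 1; funext q; rw [hget q]
      rw [this, List.ofFn_const, List.prod_replicate, hL, pow_one]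
    · intro v _ hv
      rw [if_neg, zero_smul]
      intro hcond
      apply hv
      rw [hsingle] at hcond
      exact List.ofFn_inj.1 hcond
    · intro h; exact absurd (Finset.mem_univ _) h
  · intro c _ hc
    apply Finset.sum_eq_zero
    intro v _
    rw [if_neg, zero_smul]
    intro hcond
    apply hc
    refine (Composition.eq_single_iff_length hp).2 ?_
    have := congrArg List.length hcond
    simpa using this
  · intro h; exact absurd (Finset.mem_univ _) h

noncomputable def L1 (N : ℕ) (k : Type) [Field k] : (H N k ⊗[k] H N k) →ₗ[k] H N k :=
  (TensorProduct.lid k (H N k)).toLinearMap ∘ₗ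
    TensorProduct.map (eps N k).toLinearMap LinearMap.id

noncomputable def L2 (N : ℕ) (k : Type) [Field k] : (H N k ⊗[k] H N k) →ₗ[k] H N k :=
  (TensorProduct.rid k (H N k)).toLinearMap ∘ₗ
    TensorProduct.map LinearMap.id (eps N k).toLinearMap

lemma L1_mul (N : ℕ) (k : Type) [Field k] (z w : H N k ⊗[k] H N k) :
    L1 N k (z * w) = L1 N k z * L1 N k w := by
  induction z using TensorProduct.induction_on with
  | zero => simp
  | tmul a b =>
    induction w using TensorProduct.induction_on with
    | zero => simp
    | tmul c d =>
      simp only [L1, Algebra.TensorProduct.tmul_mul_tmul, LinearMap.comp_apply,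
        TensorProduct.map_tmul, LinearMap.id_coe, id_eq, LinearEquiv.coe_coe,
        TensorProduct.lid_tmul, AlgHom.toLinearMap_apply, map_mul]
      rw [smul_mul_smul_comm]
    | add x y hx hy => simp only [mul_add, map_add, hx, hy]
  | add x y hx hy => simp only [add_mul, map_add, hx, hy]

lemma L2_mul (N : ℕ) (k : Type) [Field k] (z w : H N k ⊗[k] H N k) :
    L2 N k (z * w) = L2 N k z * L2 N k w := by
  induction z using TensorProduct.induction_on with
  | zero => simp
  | tmul a b =>
    induction w using TensorProduct.induction_on with
    | zero => simp
    | tmul c d =>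
      simp only [L2, Algebra.TensorProduct.tmul_mul_tmul, LinearMap.comp_apply,
        TensorProduct.map_tmul, LinearMap.id_coe, id_eq, LinearEquiv.coe_coe,
        TensorProduct.rid_tmul, AlgHom.toLinearMap_apply, map_mul]
      rw [smul_mul_smul_comm]
    | add x y hx hy => simp only [mul_add, map_add, hx, hy]
  | add x y hx hy => simp only [add_mul, map_add, hx, hy]

/-- `ε` is a counit for the BFK comultiplication `Δ`. -/
theorem eps_counit (N : ℕ) (hN : 1 ≤ N) (k : Type) [Field k] :
    (TensorProduct.lid k (H N k)).toLinearMap ∘ₗ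
        (TensorProduct.map (eps N k).toLinearMap LinearMap.id) ∘ₗ (Delta N k).toLinearMap
      = LinearMap.id ∧
    (TensorProduct.rid k (H N k)).toLinearMap ∘ₗ
        (TensorProduct.map LinearMap.id (eps N k).toLinearMap) ∘ₗ (Delta N k).toLinearMap
      = LinearMap.id := by
  constructor
  · have hF : (AlgHom.ofLinearMap (L1 N k ∘ₗ (Delta N k).toLinearMap)
        (by simp [L1, Algebra.TensorProduct.one_def])
        (fun x y => by simp only [LinearMap.comp_apply, AlgHom.toLinearMap_apply, map_mul, L1_mul]))
        = AlgHom.id k (H N k) := by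
      apply FreeAlgebra.hom_ext
      funext g
      obtain ⟨⟨i, u⟩, hu⟩ := g
      simp only [Function.comp_apply, AlgHom.ofLinearMap_apply, LinearMap.comp_apply,
        AlgHom.toLinearMap_apply, AlgHom.coe_id, id_eq]
      change L1 N k ((Delta N k) (FreeAlgebra.ι k ⟨(i, u), hu⟩)) = _
      rw [Delta, FreeAlgebra.lift_ι_apply]
      have := genL N k i u hu
      simp only [L1, LinearMap.comp_apply, LinearEquiv.coe_coe]
      rw [this, Y, dif_pos hu]
    have := congrArg AlgHom.toLinearMap hF

    calc (TensorProduct.lid k (H N k)).toLinearMap ∘ₗ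
        (TensorProduct.map (eps N k).toLinearMap LinearMap.id) ∘ₗ (Delta N k).toLinearMap
        = L1 N k ∘ₗ (Delta N k).toLinearMap := by rw [L1, LinearMap.comp_assoc]
      _ = LinearMap.id := this
  · have hF : (AlgHom.ofLinearMap (L2 N k ∘ₗ (Delta N k).toLinearMap)
        (by simp [L2, Algebra.TensorProduct.one_def])
        (fun x y => by simp only [LinearMap.comp_apply, AlgHom.toLinearMap_apply, map_mul, L2_mul]))
        = AlgHom.id k (H N k) := by
      apply FreeAlgebra.hom_ext
      funext g
      obtain ⟨⟨i, u⟩, hu⟩ := g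
      simp only [Function.comp_apply, AlgHom.ofLinearMap_apply, LinearMap.comp_apply,
        AlgHom.toLinearMap_apply, AlgHom.coe_id, id_eq]
      change L2 N k ((Delta N k) (FreeAlgebra.ι k ⟨(i, u), hu⟩)) = _
      rw [Delta, FreeAlgebra.lift_ι_apply]
      have := genR N k i u hu
      simp only [L2, LinearMap.comp_apply, LinearEquiv.coe_coe]
      rw [this, Y, dif_pos hu]
    have := congrArg AlgHom.toLinearMap hF

    calc (TensorProduct.rid k (H N k)).toLinearMap ∘ₗ
        (TensorProduct.map LinearMap.id (eps N k).toLinearMap) ∘ₗ (Delta N k).toLinearMap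
        = L2 N k ∘ₗ (Delta N k).toLinearMap := by rw [L2, LinearMap.comp_assoc]
      _ = LinearMap.id := this
end

section
/- For n ∈ ℕ let H_n ⊆ H be the k-linear span of all products Y_{u_1}^{i_1} ⋯ Y_{u_q}^{i_q} of generators (q ≥ 0, the empty product being 1) with Σ_{k=1}^{q} (length(u_k) − 1) = n; in particular H_0 = k·1. Then the Brouder–Fabretti–Krattenthaler comultiplication is graded: for every n and every x ∈ H_n, Δ(x) lies in Σ_{p+q=n} (H_p ⊗ H_q), the sum over p + q = n of the images of H_p ⊗ H_q in H ⊗ H under the canonical map. Hence (H, Δ, ε) is a graded connected bialgebra. -/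
open scoped TensorProduct

/-- `H_n`: the `k`-linear span of all products `Y_{u_1}^{i_1} ⋯ Y_{u_q}^{i_q}` of
generators (the empty product being `1`) with `Σ_k (|u_k| − 1) = n`. -/
noncomputable def Hgrade (N : ℕ) (k : Type) [Field k] (n : ℕ) : Submodule k (H N k) :=
  Submodule.span k
    {x : H N k | ∃ L : List (Gen N),
      (L.map (fun g => g.1.2.length - 1)).sum = n ∧
      x = (L.map (fun g => FreeAlgebra.ι k g)).prod}

section Aux

variable (N : ℕ) (k : Type) [Field k]

lemma Hgrade_one_mem : (1 : H N k) ∈ Hgrade N k 0 :=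
  Submodule.subset_span ⟨[], rfl, rfl⟩

lemma Y_mem (i : Fin N) (u : List (Fin N)) :
    Y N k i u ∈ Hgrade N k (u.length - 1) := by
  unfold Y
  split_ifs with h h2
  · exact Submodule.subset_span ⟨[⟨(i, u), h⟩], by simp, by simp⟩
  · subst h2
    exact Submodule.subset_span ⟨[], by simp, by simp⟩
  · exact Submodule.zero_mem _

lemma Hgrade_mul_mem {a b : ℕ} {x y : H N k} (hx : x ∈ Hgrade N k a)
    (hy : y ∈ Hgrade N k b) : x * y ∈ Hgrade N k (a + b) := by
  induction hx using Submodule.span_induction with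
  | mem x hx =>
    induction hy using Submodule.span_induction with
    | mem y hy =>
      obtain ⟨L, hL, rfl⟩ := hx
      obtain ⟨L', hL', rfl⟩ := hy
      refine Submodule.subset_span ⟨L ++ L', ?_, ?_⟩
      · simp [← hL, ← hL']
      · simp
    | zero => rw [mul_zero]; exact Submodule.zero_mem _
    | add y z _ _ ihy ihz => rw [mul_add]; exact Submodule.add_mem _ ihy ihz
    | smul c y _ ih => rw [mul_smul_comm]; exact Submodule.smul_mem _ _ ih
  | zero => rw [zero_mul]; exact Submodule.zero_mem _
  | add x z _ _ ihx ihz => rw [add_mul]; exact Submodule.add_mem _ ihx ihz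
  | smul c x _ ih => rw [smul_mul_assoc]; exact Submodule.smul_mem _ _ ih

lemma ofFn_prod_mem : ∀ (m : ℕ) (f : Fin m → H N k) (d : Fin m → ℕ),
    (∀ q, f q ∈ Hgrade N k (d q)) → (List.ofFn f).prod ∈ Hgrade N k (∑ q, d q)
  | 0, f, d, _ => by
    simpa using Hgrade_one_mem N k
  | (m + 1), f, d, h => by
    rw [List.ofFn_succ, List.prod_cons, Fin.sum_univ_succ]
    exact Hgrade_mul_mem N k (h 0) (ofFn_prod_mem m _ _ (fun q => h q.succ))

/-- The target submodule for grade `n`. -/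
noncomputable def T (n : ℕ) : Submodule k (H N k ⊗[k] H N k) :=
  ⨆ (pq : ℕ × ℕ) (_ : pq.1 + pq.2 = n),
    LinearMap.range
      (TensorProduct.map (Hgrade N k pq.1).subtype (Hgrade N k pq.2).subtype)

lemma tmul_mem_T {p q n : ℕ} (hpq : p + q = n) {x y : H N k}
    (hx : x ∈ Hgrade N k p) (hy : y ∈ Hgrade N k q) :
    x ⊗ₜ[k] y ∈ T N k n := by
  apply Submodule.mem_iSup_of_mem (p, q)
  apply Submodule.mem_iSup_of_mem hpq
  exact ⟨(⟨x, hx⟩ : Hgrade N k p) ⊗ₜ[k] (⟨y, hy⟩ : Hgrade N k q), by simp⟩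

lemma T_le_span (n : ℕ) :
    T N k n ≤ Submodule.span k
      {z : H N k ⊗[k] H N k | ∃ p : ℕ, ∃ q : ℕ, ∃ x y : H N k,
        p + q = n ∧ x ∈ Hgrade N k p ∧ y ∈ Hgrade N k q ∧ z = x ⊗ₜ[k] y} := by
  apply iSup_le; intro pq; apply iSup_le; intro hpq
  rw [TensorProduct.range_map_eq_span_tmul]
  apply Submodule.span_mono
  rintro z ⟨a, b, rfl⟩
  exact ⟨pq.1, pq.2, a, b, hpq, a.2, b.2, by simp⟩

lemma T_mul_mem {a b : ℕ} {x y : H N k ⊗[k] H N k} (hx : x ∈ T N k a)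
    (hy : y ∈ T N k b) : x * y ∈ T N k (a + b) := by
  have hx' := T_le_span N k a hx
  have hy' := T_le_span N k b hy
  clear hx hy
  induction hx' using Submodule.span_induction with
  | mem x hx =>
    induction hy' using Submodule.span_induction with
    | mem y hy =>
      obtain ⟨p, q, x1, x2, hpq, hx1, hx2, rfl⟩ := hx
      obtain ⟨p', q', y1, y2, hpq', hy1, hy2, rfl⟩ := hy
      rw [Algebra.TensorProduct.tmul_mul_tmul]
      exact tmul_mem_T N k (by omega) (Hgrade_mul_mem N k hx1 hy1)
        (Hgrade_mul_mem N k hx2 hy2)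
    | zero => rw [mul_zero]; exact Submodule.zero_mem _
    | add y z _ _ ihy ihz => rw [mul_add]; exact Submodule.add_mem _ ihy ihz
    | smul c y _ ih => rw [mul_smul_comm]; exact Submodule.smul_mem _ _ ih
  | zero => rw [zero_mul]; exact Submodule.zero_mem _
  | add x z _ _ ihx ihz => rw [add_mul]; exact Submodule.add_mem _ ihx ihz
  | smul c x _ ih => rw [smul_mul_assoc]; exact Submodule.smul_mem _ _ ih

lemma T_one_mem : (1 : H N k ⊗[k] H N k) ∈ T N k 0 := by
  rw [Algebra.TensorProduct.one_def]
  exact tmul_mem_T N k (p := 0) (q := 0) (n := 0) rfl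
    (Hgrade_one_mem N k) (Hgrade_one_mem N k)

lemma block_length {α : Type*} (u : List α) (c : Composition u.length)
    (q : Fin c.length) :
    ((u.splitWrtComposition c).get
      (Fin.cast (u.length_splitWrtComposition c).symm q)).length = c.blocksFun q := by
  have h := List.map_length_splitWrtComposition u c
  simp only [List.get_eq_getElem, Composition.blocksFun, ← h, List.getElem_map,
    Fin.coe_cast]

lemma D_mem (i : Fin N) (u : List (Fin N)) (hu : 1 ≤ u.length) :
    D N k i u ∈ T N k (u.length - 1) := by
  unfold D
  refine Submodule.sum_mem _ fun c _ => Submodule.sum_mem _ fun v _ => ?_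
  have hblock : ∀ q : Fin c.length,
      Y N k (v q) ((u.splitWrtComposition c).get
        (Fin.cast (u.length_splitWrtComposition c).symm q))
        ∈ Hgrade N k (c.blocksFun q - 1) := fun q => by
    have := Y_mem N k (v q) ((u.splitWrtComposition c).get
      (Fin.cast (u.length_splitWrtComposition c).symm q))
    rwa [block_length] at this
  have h1 := ofFn_prod_mem N k c.length _ _ hblock
  have h2 := Y_mem N k i (List.ofFn v)
  rw [List.length_ofFn] at h2
  refine tmul_mem_T N k ?_ h1 h2
  have hs : (∑ q, (c.blocksFun q - 1)) + c.length = u.length := by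
    have he : ∀ q : Fin c.length, c.blocksFun q - 1 + 1 = c.blocksFun q := fun q =>
      Nat.sub_add_cancel (c.one_le_blocksFun q)
    calc (∑ q, (c.blocksFun q - 1)) + c.length
        = ∑ q : Fin c.length, (c.blocksFun q - 1 + 1) := by
          rw [Finset.sum_add_distrib]; simp
      _ = ∑ q, c.blocksFun q := by simp only [he]
      _ = u.length := c.sum_blocksFun
  have hl : 1 ≤ c.length := c.length_pos_of_pos (by omega)
  omega

end Aux

/-- `H_0 = k·1` and the BFK comultiplication is graded:
`Δ(H_n) ⊆ Σ_{p+q=n} H_p ⊗ H_q`; hence `(H, Δ, ε)` is a graded connected bialgebra. -/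
theorem Delta_graded (N : ℕ) (hN : 1 ≤ N) (k : Type) [Field k] :
    Hgrade N k 0 = Submodule.span k {(1 : H N k)} ∧
    ∀ n : ℕ, ∀ x ∈ Hgrade N k n,
      Delta N k x ∈
        ⨆ (pq : ℕ × ℕ) (_ : pq.1 + pq.2 = n),
          LinearMap.range
            (TensorProduct.map (Hgrade N k pq.1).subtype (Hgrade N k pq.2).subtype) := by
  constructor
  · apply le_antisymm
    · apply Submodule.span_le.2
      rintro x ⟨L, hL, rfl⟩
      have hLnil : L = [] := by
        cases L with
        | nil => rfl
        | cons g L =>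
          exfalso
          simp only [List.map_cons, List.sum_cons] at hL
          have h2 := g.2
          omega
      subst hLnil
      simpa using Submodule.subset_span (Set.mem_singleton (1 : H N k))
    · apply Submodule.span_le.2
      intro x hx
      rw [Set.mem_singleton_iff] at hx
      subst hx
      exact Hgrade_one_mem N k
  · intro n x hx
    show Delta N k x ∈ T N k n
    induction hx using Submodule.span_induction with
    | mem x hx =>
      obtain ⟨L, hL, rfl⟩ := hx
      subst hL
      induction L with
      | nil => simpa using T_one_mem N k
      | cons g L ih =>
        simp only [List.map_cons, List.prod_cons, List.sum_cons, map_mul]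
        have hD : Delta N k (FreeAlgebra.ι k g) = D N k g.1.1 g.1.2 :=
          FreeAlgebra.lift_ι_apply _ _
        rw [hD]
        have hg : 1 ≤ g.1.2.length := by have := g.2; omega
        exact T_mul_mem N k (D_mem N k g.1.1 g.1.2 hg) ih
    | zero => rw [map_zero]; exact Submodule.zero_mem _
    | add x z _ _ ihx ihz => rw [map_add]; exact Submodule.add_mem _ ihx ihz
    | smul c x _ ih => rw [map_smul]; exact Submodule.smul_mem _ _ ih
end

section
/- Let s : H → H be the unique k-algebra anti-automorphism of H with s(Y_u^i) = Y_{u*}^i for every generator, where u* denotes the reversed word of u (so s(Y_{u_1}^{i_1} ⋯ Y_{u_n}^{i_n}) = Y_{u_n*}^{i_n} ⋯ Y_{u_1*}^{i_1}). Then (s ⊗ s)∘Δ∘s = Δ as linear maps H → H ⊗ H. -/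
open scoped TensorProduct

section Aux

/-- Reverse of a composition. -/
def crev {n : ℕ} (c : Composition n) : Composition n where
  blocks := c.blocks.reverse
  blocks_pos hi := c.blocks_pos (List.mem_reverse.mp hi)
  blocks_sum := by rw [List.sum_reverse]; exact c.blocks_sum

@[simp] lemma crev_blocks {n : ℕ} (c : Composition n) : (crev c).blocks = c.blocks.reverse := rfl

/-- Cast a composition along an equality of totals. -/
def ccast {m n : ℕ} (h : m = n) (c : Composition m) : Composition n where
  blocks := c.blocks
  blocks_pos := c.blocks_pos
  blocks_sum := h ▸ c.blocks_sum

@[simp] lemma ccast_blocks {m n : ℕ} (h : m = n) (c : Composition m) :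
    (ccast h c).blocks = c.blocks := rfl

/-- Reversal as an equivalence of compositions, with a cast of totals. -/
def compRevEquiv {m n : ℕ} (h : m = n) : Composition m ≃ Composition n where
  toFun c := ccast h (crev c)
  invFun c := crev (ccast h.symm c)
  left_inv c := Composition.ext (by simp)
  right_inv c := Composition.ext (by simp)

@[simp] lemma compRevEquiv_blocks {m n : ℕ} (h : m = n) (c : Composition m) :
    (compRevEquiv h c).blocks = c.blocks.reverse := rfl

@[simp] lemma compRevEquiv_length {m n : ℕ} (h : m = n) (c : Composition m) :
    (compRevEquiv h c).length = c.length := by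
  simp [Composition.length, compRevEquiv]

variable {α : Type*}

lemma split_rev (u : List α) (c : Composition u.length) (c' : Composition u.reverse.length)
    (hb : c'.blocks = c.blocks.reverse) :
    u.reverse.splitWrtComposition c'
      = ((u.splitWrtComposition c).map List.reverse).reverse := by
  rw [List.eq_iff_flatten_eq]
  constructor
  · rw [List.flatten_splitWrtComposition]
    conv_lhs => rw [← List.flatten_splitWrtComposition u c]
    rw [List.reverse_flatten]
  · rw [List.map_length_splitWrtComposition, hb, List.map_reverse, List.map_map]
    have : List.length ∘ List.reverse = (List.length : List α → ℕ) := by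
      funext l; simp
    rw [this, List.map_length_splitWrtComposition]

end Aux

section AlgAux

variable {N : ℕ} {k : Type} [Field k]

lemma arith (a b n : ℕ) (h : b = a) (hn : n < b) : n = a - (b - 1 - n + 1) := by omega

lemma sY (s : H N k →ₗ[k] H N k) (hs1 : s 1 = 1)
    (hsgen : ∀ g : Gen N, s (FreeAlgebra.ι k g) =
      FreeAlgebra.ι k (⟨(g.1.1, g.1.2.reverse), by simpa using g.2⟩ : Gen N))
    (j : Fin N) (w : List (Fin N)) :
    s (Y N k j w) = Y N k j w.reverse := by
  by_cases h : 2 ≤ w.length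
  · rw [Y, dif_pos h, hsgen ⟨(j, w), h⟩, Y, dif_pos (by simpa using h)]
  · have h' : ¬ 2 ≤ w.reverse.length := by simpa using h
    rw [Y, dif_neg h, Y, dif_neg h']
    have hrev : w.reverse = [j] ↔ w = [j] := by
      rw [List.reverse_eq_iff]; simp
    by_cases hw : w = [j]
    · rw [if_pos hw, if_pos (hrev.mpr hw), hs1]
    · rw [if_neg hw, if_neg (fun hc => hw (hrev.mp hc)), map_zero]

lemma s_prod (s : H N k →ₗ[k] H N k) (hs1 : s 1 = 1)
    (hsanti : ∀ a b : H N k, s (a * b) = s b * s a) :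
    ∀ l : List (H N k), s l.prod = (l.reverse.map s).prod
  | [] => by simpa using hs1
  | a :: l => by
    rw [List.prod_cons, hsanti, s_prod s hs1 hsanti l, List.reverse_cons, List.map_append,
      List.prod_append]
    simp

lemma smap_mul (s : H N k →ₗ[k] H N k)
    (hsanti : ∀ a b : H N k, s (a * b) = s b * s a)
    (x y : H N k ⊗[k] H N k) :
    TensorProduct.map s s (x * y) = TensorProduct.map s s y * TensorProduct.map s s x := by
  induction x using TensorProduct.induction_on with
  | zero => simp
  | tmul a b =>
    induction y using TensorProduct.induction_on with
    | zero => simp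
    | tmul c d => simp [Algebra.TensorProduct.tmul_mul_tmul, hsanti]
    | add y1 y2 h1 h2 => simp [mul_add, add_mul, h1, h2]
  | add x1 x2 h1 h2 => simp [mul_add, add_mul, h1, h2]

lemma key (s : H N k →ₗ[k] H N k) (hs1 : s 1 = 1)
    (hsanti : ∀ a b : H N k, s (a * b) = s b * s a)
    (hsgen : ∀ g : Gen N, s (FreeAlgebra.ι k g) =
      FreeAlgebra.ι k (⟨(g.1.1, g.1.2.reverse), by simpa using g.2⟩ : Gen N))
    (i : Fin N) (u : List (Fin N)) :
    TensorProduct.map s s (D N k i u.reverse) = D N k i u := by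
  rw [D, D, map_sum]
  refine Eq.symm (Fintype.sum_equiv (compRevEquiv (u.length_reverse).symm) _ _ ?_)
  intro c
  rw [map_sum]
  set c' := compRevEquiv (u.length_reverse).symm c with hc'
  have hm : c'.length = c.length := compRevEquiv_length _ c
  have hL : (u.splitWrtComposition c).length = c.length :=
    List.length_splitWrtComposition u c
  have hsplit : u.reverse.splitWrtComposition c'
      = ((u.splitWrtComposition c).map List.reverse).reverse :=
    split_rev u c c' (by simp [hc'])
  refine Fintype.sum_bijective (fun (v : Fin c.length → Fin N) (q : Fin c'.length) =>
      v (Fin.cast hm q).rev)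
    (Equiv.bijective
      (⟨fun v q => v (Fin.cast hm q).rev, fun w q => w (Fin.cast hm.symm q.rev),
        fun v => funext fun q => congrArg v (by ext; simp only [Fin.val_rev, Fin.coe_cast]; omega),
        fun w => funext fun q => congrArg w (by ext; simp only [Fin.val_rev, Fin.coe_cast]; omega)⟩ :
        (Fin c.length → Fin N) ≃ (Fin c'.length → Fin N))) _ _ ?_
  intro v
  rw [TensorProduct.map_tmul]
  congr 1
  · -- first tensor factor
    rw [s_prod s hs1 hsanti]
    congr 1
    refine List.ext_getElem (by simp [hm]) ?_
    intro n h1 h2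
    simp only [List.getElem_map, List.getElem_reverse, List.getElem_ofFn,
      List.get_eq_getElem, Fin.coe_cast, List.length_ofFn] at h1 h2 ⊢
    simp only [hsplit]
    rw [sY s hs1 hsgen, List.getElem_reverse, List.getElem_map, List.reverse_reverse]
    simp only [List.length_map, hL]
    have hidx : c.length - 1 - (c'.length - 1 - n) = n := by omega
    simp only [hidx]
    refine congrArg₂ (Y N k) ?_ rfl
    apply congrArg v
    refine Fin.ext ?_
    simp only [Fin.val_rev, Fin.coe_cast, Fin.val_mk]
    omega
  · -- second tensor factor
    rw [sY s hs1 hsgen]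
    congr 1
    refine List.ext_getElem (by simp [hm]) ?_
    intro n h1 h2
    simp only [List.getElem_reverse, List.getElem_ofFn, List.length_ofFn,
      List.length_reverse] at h1 h2 ⊢
    apply congrArg v
    refine Fin.ext ?_
    simp only [Fin.val_rev, Fin.coe_cast, Fin.val_mk]
    exact arith _ _ _ hm h2

end AlgAux

/-- if `s` is the `k`-algebra anti-automorphism of `H` with
`s(Y_u^i) = Y_{u*}^i` on generators (`u*` the reversed word), then `(s ⊗ s) ∘ Δ ∘ s = Δ`. -/
theorem reflection_intertwines_Delta (N : ℕ) (hN : 1 ≤ N) (k : Type) [Field k]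
    (s : H N k →ₗ[k] H N k)
    (hs1 : s 1 = 1)
    (hsanti : ∀ a b : H N k, s (a * b) = s b * s a)
    (hsbij : Function.Bijective s)
    (hsgen : ∀ g : Gen N, s (FreeAlgebra.ι k g) =
      FreeAlgebra.ι k (⟨(g.1.1, g.1.2.reverse), by simpa using g.2⟩ : Gen N)) :
    (TensorProduct.map s s) ∘ₗ (Delta N k).toLinearMap ∘ₗ s = (Delta N k).toLinearMap := by
  have h1t : TensorProduct.map s s (1 : H N k ⊗[k] H N k) = 1 := by
    rw [Algebra.TensorProduct.one_def, TensorProduct.map_tmul, hs1]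
  have hsalg : ∀ r : k, s (algebraMap k (H N k) r) = algebraMap k (H N k) r := by
    intro r
    rw [Algebra.algebraMap_eq_smul_one, map_smul, hs1]
  apply LinearMap.ext
  intro x
  simp only [LinearMap.coe_comp, Function.comp_apply, AlgHom.toLinearMap_apply]
  refine FreeAlgebra.induction k (Gen N) ?_ ?_ ?_ ?_ x
  · intro r
    rw [hsalg, AlgHom.commutes, Algebra.algebraMap_eq_smul_one, map_smul, h1t]
  · intro g
    rw [hsgen g, Delta, FreeAlgebra.lift_ι_apply, FreeAlgebra.lift_ι_apply]
    exact key s hs1 hsanti hsgen g.1.1 g.1.2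
  · intro a b ha hb
    rw [hsanti, map_mul, smap_mul s hsanti, ha, hb, map_mul]
  · intro a b ha hb
    simp only [map_add, ha, hb]
end
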